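/- arXiv:2201.12942 — 5 statements merged into one kernel-verified Lean document; each statement's English description precedes it below -/
import Mathlib

section
/- Let Φ: G → H be a right-resolving graph homomorphism. The stability relation ∼_Φ is a congruence with respect to Φ; that is, for all states I of H, all paths u in H starting at I, and all I₁, I₂ in the fiber of I with I₁ ∼_Φ I₂, we have I₁·u ∼_Φ I₂·u. -/
/-- A finite directed multigraph. -/
structure FinGraph where
  V : Type
  E : Type
  [fintV : Fintype V]
  [fintE : Fintype E]
  [decV : DecidableEq V]
  [decE : DecidableEq E]
  src : E → V
  tgt : E → V

attribute [instance] FinGraph.fintV FinGraph.fintE FinGraph.decV FinGraph.decE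

/-- A graph homomorphism. -/
structure GHom (G H : FinGraph) where
  eMap : G.E → H.E
  vMap : G.V → H.V
  src_eq : ∀ e, H.src (eMap e) = vMap (G.src e)
  tgt_eq : ∀ e, H.tgt (eMap e) = vMap (G.tgt e)

def GHom.comp {G K H : FinGraph} (Δ : GHom K H) (Ψ : GHom G K) : GHom G H where
  eMap := Δ.eMap ∘ Ψ.eMap
  vMap := Δ.vMap ∘ Ψ.vMap
  src_eq := fun e => by
    simp only [Function.comp_apply, Δ.src_eq, Ψ.src_eq]
  tgt_eq := fun e => by
    simp only [Function.comp_apply, Δ.tgt_eq, Ψ.tgt_eq]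

/-- The restriction of a homomorphism to the outgoing edges of a state. -/
def outMap {G H : FinGraph} (Φ : GHom G H) (I : G.V) :
    {e : G.E // G.src e = I} → {f : H.E // H.src f = Φ.vMap I} :=
  fun e => ⟨Φ.eMap e.1, (Φ.src_eq e.1).trans (congrArg Φ.vMap e.2)⟩

/-- A right-resolver: a surjective homomorphism restricting to a bijection
on the outgoing edges of each state. -/
def IsRR {G H : FinGraph} (Φ : GHom G H) : Prop :=
  Function.Surjective Φ.vMap ∧ ∀ I : G.V, Function.Bijective (outMap Φ I)

/-- `IsPathFrom H I u`: the edge list `u` is a path in `H` starting at `I`. -/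
def IsPathFrom (H : FinGraph) : H.V → List H.E → Prop
  | _, [] => True
  | I, e :: u => H.src e = I ∧ IsPathFrom H (H.tgt e) u

/-- The terminal state of a path starting at `I`. -/
def pathEnd (H : FinGraph) (I : H.V) (u : List H.E) : H.V :=
  u.foldl (fun _ e => H.tgt e) I

/-- One-step transition: `I · a` is the target of the unique edge at `I`
lifting `a` (when `Φ` is right-resolving and `a` starts at the image of `I`). -/
noncomputable def step {G H : FinGraph} (Φ : GHom G H) (I : G.V) (a : H.E) : G.V :=
  if h : ∃ e : G.E, G.src e = I ∧ Φ.eMap e = a then G.tgt h.choose else I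

/-- Transition along a word: `I · u`. -/
noncomputable def transPath {G H : FinGraph} (Φ : GHom G H) (I : G.V) (u : List H.E) : G.V :=
  u.foldl (step Φ) I

/-- The stability relation of a right-resolver. -/
def Stable {G H : FinGraph} (Φ : GHom G H) (I₁ I₂ : G.V) : Prop :=
  Φ.vMap I₁ = Φ.vMap I₂ ∧
  ∀ u : List H.E, IsPathFrom H (Φ.vMap I₁) u →
    ∃ v : List H.E, IsPathFrom H (pathEnd H (Φ.vMap I₁) u) v ∧
      transPath Φ I₁ (u ++ v) = transPath Φ I₂ (u ++ v)

/-- A right-resolver is synchronizing if each fiber of its state map is a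
single stability class. -/
def Synchronizing {G H : FinGraph} (Φ : GHom G H) : Prop :=
  ∀ I₁ I₂ : G.V, Φ.vMap I₁ = Φ.vMap I₂ → Stable Φ I₁ I₂

/-- The fiber of the state map over a state of the codomain. -/
def fiber {G H : FinGraph} (Φ : GHom G H) (I : H.V) : Set G.V := {J | Φ.vMap J = I}

/-- The image `U · u` of a set of states under transition along a word. -/
noncomputable def setTrans {G H : FinGraph} (Φ : GHom G H) (U : Set G.V)
    (u : List H.E) : Set G.V :=
  (fun J => transPath Φ J u) '' U

/-- A minimal image of a right-resolver. -/
def IsMinImage {G H : FinGraph} (Φ : GHom G H) (U : Set G.V) : Prop :=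
  ∃ (I : H.V) (u : List H.E), IsPathFrom H I u ∧ U = setTrans Φ (fiber Φ I) u ∧
    ∀ v : List H.E, IsPathFrom H (pathEnd H I u) v →
      (setTrans Φ U v).ncard = U.ncard

/-- Strong connectedness: a directed path between every ordered pair of states. -/
def StronglyConnected (G : FinGraph) : Prop :=
  ∀ I J : G.V, ∃ u : List G.E, IsPathFrom G I u ∧ pathEnd G I u = J

/-! Transition along words is a right action, `J · (u ++ w) = (J · u) · w`, which for a right-resolver
lies over the corresponding action on paths of `H`. So a synchronizing extension `v` of `u ++ w`
for `I₁, I₂` is a synchronizing extension of `w` for `I₁ · u, I₂ · u`. -/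

lemma transPath_append {G H : FinGraph} (Φ : GHom G H) (J : G.V) (u v : List H.E) :
    transPath Φ J (u ++ v) = transPath Φ (transPath Φ J u) v :=
  List.foldl_append

lemma pathEnd_append (H : FinGraph) (I : H.V) (u v : List H.E) :
    pathEnd H I (u ++ v) = pathEnd H (pathEnd H I u) v :=
  List.foldl_append

lemma IsPathFrom.append {H : FinGraph} {I : H.V} {u v : List H.E} (hu : IsPathFrom H I u)
    (hv : IsPathFrom H (pathEnd H I u) v) : IsPathFrom H I (u ++ v) := by
  induction u generalizing I with
  | nil => exact hv
  | cons e u ih => exact ⟨hu.1, ih hu.2 hv⟩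

lemma vMap_step {G H : FinGraph} {Φ : GHom G H} {J : G.V} (hJ : Function.Surjective (outMap Φ J))
    {a : H.E} (ha : H.src a = Φ.vMap J) : Φ.vMap (step Φ J a) = H.tgt a := by
  obtain ⟨e, he⟩ := hJ ⟨a, ha⟩
  have hlift : ∃ e : G.E, G.src e = J ∧ Φ.eMap e = a := ⟨e.1, e.2, congrArg Subtype.val he⟩
  rw [step, dif_pos hlift, ← Φ.tgt_eq, hlift.choose_spec.2]

lemma vMap_transPath {G H : FinGraph} {Φ : GHom G H} (hΦ : ∀ J, Function.Surjective (outMap Φ J))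
    {J : G.V} {u : List H.E} (hu : IsPathFrom H (Φ.vMap J) u) :
    Φ.vMap (transPath Φ J u) = pathEnd H (Φ.vMap J) u := by
  induction u generalizing J with
  | nil => rfl
  | cons a u ih =>
    have hstep := vMap_step (hΦ J) hu.1
    exact (ih (hstep ▸ hu.2)).trans (congrArg (pathEnd H · u) hstep)

theorem stability_is_congruence_general {G H : FinGraph} (Φ : GHom G H) (hΦ : IsRR Φ)
    (I : H.V) (I₁ I₂ : G.V) (h₁ : Φ.vMap I₁ = I)
    (hst : Stable Φ I₁ I₂) (u : List H.E) (hu : IsPathFrom H I u) :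
    Stable Φ (transPath Φ I₁ u) (transPath Φ I₂ u) := by
  subst h₁
  have hout : ∀ J, Function.Surjective (outMap Φ J) := fun J => (hΦ.2 J).2
  have hend₁ := vMap_transPath hout hu
  have hend₂ : Φ.vMap (transPath Φ I₂ u) = pathEnd H (Φ.vMap I₁) u := by
    rw [hst.1] at hu ⊢
    exact vMap_transPath hout hu
  refine ⟨hend₁.trans hend₂.symm, fun w hw => ?_⟩
  rw [hend₁] at hw
  obtain ⟨v, hv, hsync⟩ := hst.2 (u ++ w) (hu.append hw)
  refine ⟨v, by rwa [hend₁, ← pathEnd_append], ?_⟩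
  simpa only [List.append_assoc, transPath_append] using hsync

/-- the stability relation is a congruence. -/
theorem stability_is_congruence {G H : FinGraph} (Φ : GHom G H) (hΦ : IsRR Φ)
    (I : H.V) (I₁ I₂ : G.V) (h₁ : Φ.vMap I₁ = I) (h₂ : Φ.vMap I₂ = I)
    (hst : Stable Φ I₁ I₂) (u : List H.E) (hu : IsPathFrom H I u) :
    Stable Φ (transPath Φ I₁ u) (transPath Φ I₂ u) :=
  stability_is_congruence_general Φ hΦ I I₁ I₂ h₁ hst u hu
end

section
/- Let Ψ: G → K and Δ: K → H be right-resolving graph homomorphisms and Φ = Δ ∘ Ψ. If the stability relation ∼_Δ is trivial (coincides with equality), then ∼_Φ = ∼_Ψ. -/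
section Aux

variable {G K H : FinGraph}

lemma step_eq {Φ : GHom G H} (hΦ : IsRR Φ) {I : G.V} {a : H.E} {e : G.E}
    (he : G.src e = I) (ha : Φ.eMap e = a) : step Φ I a = G.tgt e := by
  have hex : ∃ e' : G.E, G.src e' = I ∧ Φ.eMap e' = a := ⟨e, he, ha⟩
  rw [step, dif_pos hex]
  have h1 := hex.choose_spec
  have hsub : (⟨hex.choose, h1.1⟩ : {e : G.E // G.src e = I}) = ⟨e, he⟩ := by
    apply (hΦ.2 I).1
    apply Subtype.ext
    show Φ.eMap _ = Φ.eMap e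
    rw [h1.2, ha]
  exact congrArg G.tgt (congrArg Subtype.val hsub)

lemma exists_lift {Δ : GHom K H} (hΔ : IsRR Δ) {J : K.V} {a : H.E}
    (ha : H.src a = Δ.vMap J) : ∃ f : K.E, K.src f = J ∧ Δ.eMap f = a := by
  obtain ⟨⟨f, hf⟩, hval⟩ := (hΔ.2 J).2 ⟨a, ha⟩
  exact ⟨f, hf, congrArg Subtype.val hval⟩

lemma isRR_comp {Ψ : GHom G K} {Δ : GHom K H} (hΨ : IsRR Ψ) (hΔ : IsRR Δ) :
    IsRR (Δ.comp Ψ) := by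
  constructor
  · exact hΔ.1.comp hΨ.1
  · intro I
    have hcomp : outMap (Δ.comp Ψ) I = (outMap Δ (Ψ.vMap I)) ∘ (outMap Ψ I) := by
      funext e; apply Subtype.ext; rfl
    rw [hcomp]
    exact (hΔ.2 _).comp (hΨ.2 I)

lemma isPathFrom_map (Δ : GHom K H) :
    ∀ (ut : List K.E) (J : K.V), IsPathFrom K J ut →
      IsPathFrom H (Δ.vMap J) (ut.map Δ.eMap)
  | [], _, _ => trivial
  | f :: ut, J, h => by
    refine ⟨by rw [Δ.src_eq, h.1], ?_⟩
    have ih := isPathFrom_map Δ ut (K.tgt f) h.2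
    show IsPathFrom H (H.tgt (Δ.eMap f)) (ut.map Δ.eMap)
    rwa [Δ.tgt_eq]

lemma pathEnd_map (Δ : GHom K H) :
    ∀ (ut : List K.E) (J : K.V),
      pathEnd H (Δ.vMap J) (ut.map Δ.eMap) = Δ.vMap (pathEnd K J ut)
  | [], _ => rfl
  | f :: ut, J => by
    show pathEnd H (H.tgt (Δ.eMap f)) (ut.map Δ.eMap) = Δ.vMap (pathEnd K (K.tgt f) ut)
    rw [Δ.tgt_eq]
    exact pathEnd_map Δ ut (K.tgt f)

lemma isPathFrom_append :
    ∀ (u : List H.E) (I : H.V) {v : List H.E}, IsPathFrom H I u →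
      IsPathFrom H (pathEnd H I u) v → IsPathFrom H I (u ++ v)
  | [], _, _, _, hv => hv
  | e :: u, I, v, h, hv => ⟨h.1, isPathFrom_append u (H.tgt e) h.2 hv⟩

lemma step_comp {Ψ : GHom G K} {Δ : GHom K H} (hΨ : IsRR Ψ) (hΔ : IsRR Δ)
    {I : G.V} {f : K.E} (hf : K.src f = Ψ.vMap I) :
    step (Δ.comp Ψ) I (Δ.eMap f) = step Ψ I f ∧ Ψ.vMap (step Ψ I f) = K.tgt f := by
  obtain ⟨⟨e, he⟩, hval⟩ := (hΨ.2 I).2 ⟨f, hf⟩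
  have hef : Ψ.eMap e = f := congrArg Subtype.val hval
  have h1 : step Ψ I f = G.tgt e := step_eq hΨ he hef
  have h2 : step (Δ.comp Ψ) I (Δ.eMap f) = G.tgt e :=
    step_eq (isRR_comp hΨ hΔ) he (by show Δ.eMap (Ψ.eMap e) = _; rw [hef])
  refine ⟨h2.trans h1.symm, ?_⟩
  rw [h1, ← Ψ.tgt_eq, hef]

lemma trans_comp {Ψ : GHom G K} {Δ : GHom K H} (hΨ : IsRR Ψ) (hΔ : IsRR Δ) :
    ∀ (ut : List K.E) (I : G.V), IsPathFrom K (Ψ.vMap I) ut →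
      transPath (Δ.comp Ψ) I (ut.map Δ.eMap) = transPath Ψ I ut ∧
      Ψ.vMap (transPath Ψ I ut) = pathEnd K (Ψ.vMap I) ut := by
  intro ut
  induction ut with
  | nil => exact fun I _ => ⟨rfl, rfl⟩
  | cons f ut ih =>
    intro I h
    obtain ⟨hs, hc⟩ := step_comp hΨ hΔ (f := f) h.1
    have hpath : IsPathFrom K (Ψ.vMap (step Ψ I f)) ut := by rw [hc]; exact h.2
    have ihs := ih (step Ψ I f) hpath
    constructor
    · show transPath (Δ.comp Ψ) (step (Δ.comp Ψ) I (Δ.eMap f)) (ut.map Δ.eMap)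
        = transPath Ψ (step Ψ I f) ut
      rw [hs]; exact ihs.1
    · show Ψ.vMap (transPath Ψ (step Ψ I f) ut) = pathEnd K (K.tgt f) ut
      rw [ihs.2, hc]

lemma trans_proj {Ψ : GHom G K} {Δ : GHom K H} (hΨ : IsRR Ψ) (hΔ : IsRR Δ) :
    ∀ (u : List H.E) (I : G.V), IsPathFrom H (Δ.vMap (Ψ.vMap I)) u →
      Ψ.vMap (transPath (Δ.comp Ψ) I u) = transPath Δ (Ψ.vMap I) u := by
  intro u
  induction u with
  | nil => exact fun I _ => rfl
  | cons a u ih =>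
    intro I h
    obtain ⟨f, hf, hfa⟩ := exists_lift hΔ h.1
    obtain ⟨hs, hc⟩ := step_comp hΨ hΔ (f := f) hf
    have hΔstep : step Δ (Ψ.vMap I) a = K.tgt f := step_eq hΔ hf hfa
    show Ψ.vMap (transPath (Δ.comp Ψ) (step (Δ.comp Ψ) I a) u)
      = transPath Δ (step Δ (Ψ.vMap I) a) u
    have hIa : step (Δ.comp Ψ) I a = step Ψ I f := by rw [← hfa]; exact hs
    rw [hIa, hΔstep]
    have hpath : IsPathFrom H (Δ.vMap (Ψ.vMap (step Ψ I f))) u := by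
      rw [hc, ← Δ.tgt_eq, hfa]; exact h.2
    have ihs := ih (step Ψ I f) hpath
    rw [hc] at ihs
    exact ihs

/-- The lift of an `H`-path through a right-resolver, starting at a given state. -/
noncomputable def liftPath (Δ : GHom K H) : K.V → List H.E → List K.E
  | _, [] => []
  | J, a :: u =>
    if h : ∃ f : K.E, K.src f = J ∧ Δ.eMap f = a then
      h.choose :: liftPath Δ (K.tgt h.choose) u
    else []

lemma liftPath_spec {Δ : GHom K H} (hΔ : IsRR Δ) :
    ∀ (u : List H.E) (J : K.V), IsPathFrom H (Δ.vMap J) u →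
      IsPathFrom K J (liftPath Δ J u) ∧ (liftPath Δ J u).map Δ.eMap = u := by
  intro u
  induction u with
  | nil => exact fun J _ => ⟨trivial, rfl⟩
  | cons a u ih =>
    intro J h
    have hex : ∃ f : K.E, K.src f = J ∧ Δ.eMap f = a := exists_lift hΔ h.1
    have hspec := hex.choose_spec
    have hpath : IsPathFrom H (Δ.vMap (K.tgt hex.choose)) u := by
      rw [← Δ.tgt_eq, hspec.2]; exact h.2
    have ihs := ih (K.tgt hex.choose) hpath
    rw [liftPath, dif_pos hex]
    exact ⟨⟨hspec.1, ihs.1⟩, by rw [List.map_cons, hspec.2, ihs.2]⟩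

end Aux

/-- if the stability relation of Δ is trivial then the stability
relations of Φ = Δ ∘ Ψ and of Ψ coincide. -/
theorem stable_comp_of_triv {G K H : FinGraph} (Ψ : GHom G K) (Δ : GHom K H)
    (hΨ : IsRR Ψ) (hΔ : IsRR Δ)
    (htriv : ∀ K₁ K₂ : K.V, Stable Δ K₁ K₂ → K₁ = K₂) :
    ∀ I₁ I₂ : G.V, Stable (Δ.comp Ψ) I₁ I₂ ↔ Stable Ψ I₁ I₂ := by
  intro I₁ I₂
  constructor
  · intro hΦ
    have hKeq : Ψ.vMap I₁ = Ψ.vMap I₂ := by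
      apply htriv
      refine ⟨hΦ.1, ?_⟩
      intro u hu
      obtain ⟨v, hv, heq⟩ := hΦ.2 u hu
      refine ⟨v, hv, ?_⟩
      have hpap : IsPathFrom H (Δ.vMap (Ψ.vMap I₁)) (u ++ v) :=
        isPathFrom_append u _ hu hv
      have h1 := trans_proj hΨ hΔ (u ++ v) I₁ hpap
      have h2 := trans_proj hΨ hΔ (u ++ v) I₂ (by
        show IsPathFrom H (Δ.vMap (Ψ.vMap I₂)) (u ++ v)
        rw [show Δ.vMap (Ψ.vMap I₂) = Δ.vMap (Ψ.vMap I₁) from hΦ.1.symm]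
        exact hpap)
      rw [← h1, ← h2, heq]
    refine ⟨hKeq, ?_⟩
    intro ut hut
    have hu : IsPathFrom H (Δ.vMap (Ψ.vMap I₁)) (ut.map Δ.eMap) :=
      isPathFrom_map Δ ut _ hut
    obtain ⟨v, hv, heq⟩ := hΦ.2 (ut.map Δ.eMap) hu
    have hv' : IsPathFrom H (Δ.vMap (pathEnd K (Ψ.vMap I₁) ut)) v := by
      rw [← pathEnd_map]; exact hv
    obtain ⟨hvtpath, hvtmap⟩ := liftPath_spec hΔ v (pathEnd K (Ψ.vMap I₁) ut) hv'
    refine ⟨liftPath Δ (pathEnd K (Ψ.vMap I₁) ut) v, hvtpath, ?_⟩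
    have hp1 : IsPathFrom K (Ψ.vMap I₁) (ut ++ liftPath Δ (pathEnd K (Ψ.vMap I₁) ut) v) :=
      isPathFrom_append ut _ hut hvtpath
    have hp2 : IsPathFrom K (Ψ.vMap I₂) (ut ++ liftPath Δ (pathEnd K (Ψ.vMap I₁) ut) v) :=
      hKeq ▸ hp1
    have t1 := (trans_comp hΨ hΔ _ I₁ hp1).1
    have t2 := (trans_comp hΨ hΔ _ I₂ hp2).1
    rw [← t1, ← t2, List.map_append, hvtmap]
    exact heq
  · intro hS
    have hVeq : (Δ.comp Ψ).vMap I₁ = (Δ.comp Ψ).vMap I₂ := congrArg Δ.vMap hS.1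
    refine ⟨hVeq, ?_⟩
    intro u hu
    obtain ⟨hutpath, hutmap⟩ := liftPath_spec hΔ u (Ψ.vMap I₁) hu
    obtain ⟨vt, hvt, heq⟩ := hS.2 (liftPath Δ (Ψ.vMap I₁) u) hutpath
    refine ⟨vt.map Δ.eMap, ?_, ?_⟩
    · have hmp := isPathFrom_map Δ vt _ hvt
      have hpe : pathEnd H (Δ.vMap (Ψ.vMap I₁)) u
          = Δ.vMap (pathEnd K (Ψ.vMap I₁) (liftPath Δ (Ψ.vMap I₁) u)) := by
        rw [← pathEnd_map, hutmap]
      show IsPathFrom H (pathEnd H (Δ.vMap (Ψ.vMap I₁)) u) (vt.map Δ.eMap)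
      rw [hpe]
      exact hmp
    · have hp1 : IsPathFrom K (Ψ.vMap I₁) (liftPath Δ (Ψ.vMap I₁) u ++ vt) :=
        isPathFrom_append _ _ hutpath hvt
      have hp2 : IsPathFrom K (Ψ.vMap I₂) (liftPath Δ (Ψ.vMap I₁) u ++ vt) :=
        hS.1 ▸ hp1
      have t1 := (trans_comp hΨ hΔ _ I₁ hp1).1
      have t2 := (trans_comp hΨ hΔ _ I₂ hp2).1
      have hmap : (liftPath Δ (Ψ.vMap I₁) u ++ vt).map Δ.eMap = u ++ vt.map Δ.eMap := by
        rw [List.map_append, hutmap]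
      show transPath (Δ.comp Ψ) I₁ (u ++ vt.map Δ.eMap)
        = transPath (Δ.comp Ψ) I₂ (u ++ vt.map Δ.eMap)
      rw [← hmap, t1, t2]
      exact heq
end

section
/- Let G, H be finite graphs with right-resolvers Φ₁, Φ₂: G → H such that the state maps ∂Φ₁ and ∂Φ₂ have the same fibers (∂Φ₁(I₁) = ∂Φ₁(I₂) iff ∂Φ₂(I₁) = ∂Φ₂(I₂) for all I₁, I₂ ∈ V(G)). Then there exists a graph automorphism τ of H such that ∂Φ₂ = ∂τ ∘ ∂Φ₁. -/
/-- A graph isomorphism from a graph to itself (automorphism when G = H). -/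
def IsIso {G H : FinGraph} (Φ : GHom G H) : Prop :=
  Function.Bijective Φ.eMap ∧ Function.Bijective Φ.vMap

/-- two right-resolvers whose state maps have the same fibers
differ on states by an automorphism of the codomain. -/
theorem same_fibers_aut {G H : FinGraph} (Φ₁ Φ₂ : GHom G H)
    (h₁ : IsRR Φ₁) (h₂ : IsRR Φ₂)
    (hfib : ∀ I₁ I₂ : G.V, Φ₁.vMap I₁ = Φ₁.vMap I₂ ↔ Φ₂.vMap I₁ = Φ₂.vMap I₂) :
    ∃ τ : GHom H H, IsIso τ ∧ ∀ I : G.V, Φ₂.vMap I = τ.vMap (Φ₁.vMap I) := by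
  classical
  obtain ⟨hs₁, hb₁⟩ := h₁
  obtain ⟨hs₂, hb₂⟩ := h₂
  choose s hs using hs₁
  set τV : H.V → H.V := fun K => Φ₂.vMap (s K) with hτV
  have key : ∀ I : G.V, Φ₂.vMap I = τV (Φ₁.vMap I) := fun I =>
    ((hfib (s (Φ₁.vMap I)) I).mp (hs _)).symm
  have τVinj : Function.Injective τV := by
    intro K K' h
    have h2 := (hfib (s K) (s K')).mpr h
    rw [hs, hs] at h2
    exact h2
  have τVsurj : Function.Surjective τV := by
    intro L
    obtain ⟨I, hI⟩ := hs₂ L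
    exact ⟨Φ₁.vMap I, by rw [← key]; exact hI⟩
  let E₁ : (K : H.V) → {e : G.E // G.src e = s K} ≃ {f : H.E // H.src f = Φ₁.vMap (s K)} :=
    fun K => Equiv.ofBijective _ (hb₁ (s K))
  have eOfmem : ∀ f : H.E, H.src f = Φ₁.vMap (s (H.src f)) := fun f => (hs _).symm
  let eOf : (f : H.E) → {e : G.E // G.src e = s (H.src f)} :=
    fun f => (E₁ (H.src f)).symm ⟨f, eOfmem f⟩
  have hΦ₁eOf : ∀ f, Φ₁.eMap (eOf f).1 = f := by
    intro f
    have h3 := (E₁ (H.src f)).apply_symm_apply ⟨f, eOfmem f⟩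
    exact congrArg Subtype.val h3
  have heOf_eq : ∀ (f : H.E) (a : G.E) (ha : G.src a = s (H.src f)),
      Φ₁.eMap a = f → (eOf f).1 = a := by
    intro f a ha haf
    have h4 : E₁ (H.src f) ⟨a, ha⟩ = ⟨f, eOfmem f⟩ := Subtype.ext haf
    have h5 := ((E₁ (H.src f)).symm_apply_eq).mpr h4.symm
    exact congrArg Subtype.val h5
  let τE : H.E → H.E := fun f => Φ₂.eMap (eOf f).1
  have hsrc : ∀ f, H.src (τE f) = τV (H.src f) := by
    intro f
    show H.src (Φ₂.eMap (eOf f).1) = τV (H.src f)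
    rw [Φ₂.src_eq, (eOf f).2]
  have htgt : ∀ f, H.tgt (τE f) = τV (H.tgt f) := by
    intro f
    show H.tgt (Φ₂.eMap (eOf f).1) = τV (H.tgt f)
    rw [Φ₂.tgt_eq, key, ← Φ₁.tgt_eq, hΦ₁eOf]
  refine ⟨⟨τE, τV, hsrc, htgt⟩, ⟨?_, τVinj, τVsurj⟩, key⟩
  constructor
  · intro f f' hff0
    have hff : τE f = τE f' := hff0
    have hK : H.src f = H.src f' := τVinj (by rw [← hsrc, ← hsrc, hff])
    have ha : G.src (eOf f').1 = s (H.src f) := by rw [(eOf f').2, hK]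
    have hval : Φ₂.eMap (eOf f).1 = Φ₂.eMap (eOf f').1 := hff
    have h6 : outMap Φ₂ (s (H.src f)) ⟨(eOf f).1, (eOf f).2⟩
         = outMap Φ₂ (s (H.src f)) ⟨(eOf f').1, ha⟩ := Subtype.ext hval
    have heq := congrArg Subtype.val ((hb₂ (s (H.src f))).1 h6)
    rw [← hΦ₁eOf f, ← hΦ₁eOf f']
    exact congrArg Φ₁.eMap heq
  · intro g
    obtain ⟨K, hK⟩ := τVsurj (H.src g)
    obtain ⟨x, hx⟩ := (hb₂ (s K)).2 ⟨g, hK.symm⟩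
    have hxg : Φ₂.eMap x.1 = g := congrArg Subtype.val hx
    refine ⟨Φ₁.eMap x.1, ?_⟩
    have hf : H.src (Φ₁.eMap x.1) = K := by rw [Φ₁.src_eq, x.2, hs]
    show Φ₂.eMap (eOf (Φ₁.eMap x.1)).1 = g
    rw [heOf_eq (Φ₁.eMap x.1) x.1 (by rw [x.2, hf]) rfl]
    exact hxg
end

section
/- Let M be a finite graph that is ≤_R-minimal, i.e., every right-resolver from M to any graph is an isomorphism (equivalently, M admits no right-resolving factor with strictly fewer states). Then the automorphism group Aut(M) acts trivially on the states of M: every automorphism τ of M satisfies ∂τ = id. -/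
/-- A graph is ≤_R-minimal if every right-resolver out of it is an isomorphism. -/
def MinimalRR (M : FinGraph) : Prop :=
  ∀ (H : FinGraph) (Φ : GHom M H), IsRR Φ →
    Function.Bijective Φ.eMap ∧ Function.Bijective Φ.vMap

section QuotAux

variable (M : FinGraph) (τ : GHom M M)

lemma iter_src (k : ℕ) (e : M.E) :
    M.src (τ.eMap^[k] e) = τ.vMap^[k] (M.src e) := by
  induction k generalizing e with
  | zero => rfl
  | succ n ih =>
      rw [Function.iterate_succ_apply, Function.iterate_succ_apply, ih, τ.src_eq]

lemma iter_tgt (k : ℕ) (e : M.E) :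
    M.tgt (τ.eMap^[k] e) = τ.vMap^[k] (M.tgt e) := by
  induction k generalizing e with
  | zero => rfl
  | succ n ih =>
      rw [Function.iterate_succ_apply, Function.iterate_succ_apply, ih, τ.tgt_eq]

lemma vper (hbij : Function.Bijective τ.vMap) :
    ∃ n : ℕ, 0 < n ∧ ∀ x : M.V, τ.vMap^[n] x = x := by
  let σ : Equiv.Perm M.V := Equiv.ofBijective _ hbij
  refine ⟨orderOf σ, orderOf_pos σ, fun x => ?_⟩
  have h1 : σ ^ orderOf σ = 1 := pow_orderOf_eq_one σ
  have h2 : (σ ^ orderOf σ) x = x := by rw [h1]; rfl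
  rwa [Equiv.Perm.coe_pow] at h2

/-- Orbit relation of the cyclic group generated by `τ` on states. -/
def vrel (I J : M.V) : Prop := ∃ k : ℕ, τ.vMap^[k] I = J

lemma vrel_equivalence (hbij : Function.Bijective τ.vMap) :
    Equivalence (vrel M τ) := by
  obtain ⟨n, hn, hid⟩ := vper M τ hbij
  constructor
  · exact fun x => ⟨0, rfl⟩
  · rintro x y ⟨k, rfl⟩
    refine ⟨k * (n - 1), ?_⟩
    rw [← Function.iterate_add_apply]
    have h1 : k * (n - 1) + k = n * k := by
      have h2 : n - 1 + 1 = n := Nat.succ_pred_eq_of_pos hn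
      calc k * (n - 1) + k = k * ((n - 1) + 1) := by rw [Nat.mul_succ]
        _ = k * n := by rw [h2]
        _ = n * k := Nat.mul_comm k n
    rw [h1, Function.iterate_mul]
    exact Function.iterate_fixed (hid x) k
  · rintro x y z ⟨k, rfl⟩ ⟨l, rfl⟩
    exact ⟨l + k, (Function.iterate_add_apply _ l k x)⟩

/-- The setoid of orbits. -/
def vsetoid (hbij : Function.Bijective τ.vMap) : Setoid M.V :=
  ⟨vrel M τ, vrel_equivalence M τ hbij⟩

/-- The quotient graph `M / ⟨τ⟩`. -/
noncomputable def qgraph (hbij : Function.Bijective τ.vMap) : FinGraph :=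
  letI s := vsetoid M τ hbij
  { V := Quotient s
    E := {e : M.E // M.src e = (Quotient.mk s (M.src e)).out}
    fintV := @Fintype.ofFinite _ (Quotient.finite s)
    fintE := Subtype.fintype _
    decV := Classical.decEq _
    decE := inferInstance
    src := fun e => Quotient.mk s (M.src e.val)
    tgt := fun e => Quotient.mk s (M.tgt e.val) }

/-- Number of applications of `τ` needed to carry `I` to the chosen
representative of its orbit. -/
noncomputable def kk (hbij : Function.Bijective τ.vMap) (I : M.V) : ℕ :=
  ((vrel_equivalence M τ hbij).symm
    (Quotient.exact (Quotient.out_eq (Quotient.mk (vsetoid M τ hbij) I)))).choose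

lemma kk_spec (hbij : Function.Bijective τ.vMap) (I : M.V) :
    τ.vMap^[kk M τ hbij I] I = (Quotient.mk (vsetoid M τ hbij) I).out :=
  ((vrel_equivalence M τ hbij).symm
    (Quotient.exact (Quotient.out_eq (Quotient.mk (vsetoid M τ hbij) I)))).choose_spec

/-- The quotient homomorphism `M → M/⟨τ⟩`. -/
noncomputable def qhom (hbij : Function.Bijective τ.vMap) :
    GHom M (qgraph M τ hbij) where
  vMap I := Quotient.mk (vsetoid M τ hbij) I
  eMap e := ⟨τ.eMap^[kk M τ hbij (M.src e)] e, by
    have h1 : M.src (τ.eMap^[kk M τ hbij (M.src e)] e)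
        = (Quotient.mk (vsetoid M τ hbij) (M.src e)).out := by
      rw [iter_src, kk_spec]
    rw [h1, Quotient.out_eq]⟩
  src_eq e := by
    show Quotient.mk (vsetoid M τ hbij) (M.src (τ.eMap^[kk M τ hbij (M.src e)] e))
      = Quotient.mk (vsetoid M τ hbij) (M.src e)
    rw [iter_src]
    exact Quotient.sound ((vrel_equivalence M τ hbij).symm ⟨_, rfl⟩)
  tgt_eq e := by
    show Quotient.mk (vsetoid M τ hbij) (M.tgt (τ.eMap^[kk M τ hbij (M.src e)] e))
      = Quotient.mk (vsetoid M τ hbij) (M.tgt e)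
    rw [iter_tgt]
    exact Quotient.sound ((vrel_equivalence M τ hbij).symm ⟨_, rfl⟩)

lemma qhom_rr (hbij : Function.Bijective τ.vMap)
    (hebij : Function.Bijective τ.eMap) : IsRR (qhom M τ hbij) := by
  constructor
  · intro q
    exact ⟨q.out, Quotient.out_eq q⟩
  · intro I
    constructor
    · intro e₁ e₂ h
      have h1 : τ.eMap^[kk M τ hbij I] e₁.1 = τ.eMap^[kk M τ hbij I] e₂.1 := by
        have h2 := congrArg (fun x => x.1.1) h
        simpa [outMap, qhom, e₁.2, e₂.2] using h2
      exact Subtype.ext ((hebij.1.iterate _) h1)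
    · rintro ⟨f, hf⟩
      have hf' : Quotient.mk (vsetoid M τ hbij) (M.src f.1)
          = Quotient.mk (vsetoid M τ hbij) I := hf
      have hsrc : M.src f.1 = τ.vMap^[kk M τ hbij I] I := by
        have := f.2
        rw [hf'] at this
        rw [this, kk_spec]
      obtain ⟨e0, he0⟩ := (hebij.2.iterate (kk M τ hbij I)) f.1
      have hsrc0 : M.src e0 = I := by
        apply (hbij.1.iterate (kk M τ hbij I))
        rw [← iter_src, he0, hsrc]
      refine ⟨⟨e0, hsrc0⟩, ?_⟩
      apply Subtype.ext
      apply Subtype.ext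
      show τ.eMap^[kk M τ hbij (M.src e0)] e0 = f.1
      rw [hsrc0]
      exact he0

end QuotAux

/-- the automorphism group of a ≤_R-minimal graph acts trivially
on states. -/
theorem minimal_aut_trivial_on_states (M : FinGraph)
    (hsf : ∀ I : M.V, ∃ e : M.E, M.src e = I)
    (hM : MinimalRR M) (τ : GHom M M) (hτ : IsIso τ) :
    ∀ I : M.V, τ.vMap I = I := by
  intro I
  have hbij := hτ.2
  have hRR := qhom_rr M τ hbij hτ.1
  have h := hM _ _ hRR
  have hinj : Function.Injective (qhom M τ hbij).vMap := h.2.1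
  have hq : Quotient.mk (vsetoid M τ hbij) (τ.vMap I)
      = Quotient.mk (vsetoid M τ hbij) I := by
    refine Quotient.sound ((vrel_equivalence M τ hbij).symm ⟨1, ?_⟩)
    simp
  exact hinj hq
end

section
/- Let H₁, H₂ be bunchy finite graphs with common minimal right-resolving factor M, let Ψ_i: H_i → M be right-resolvers, and let P = H₁ ×_{Ψ₁,Ψ₂} H₂. Then P is bunchy: for every state (I₁,I₂) of P and every pair of outgoing edges e, e' of (I₁,I₂), if their images under Ψ_P = Ψ_i ∘ Ψ̂_i have the same target in M, then e and e' have the same target in P. -/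
/-- A graph is bunchy (relative to the state map σ onto its minimal
right-resolving factor) if σ is injective on each follower set: outgoing
edges of a common source with the same σ-image of targets have equal targets. -/
def BunchyVia {G M : FinGraph} (σ : G.V → M.V) : Prop :=
  ∀ e e' : G.E, G.src e = G.src e' → σ (G.tgt e) = σ (G.tgt e') →
    G.tgt e = G.tgt e'

/-- The fiber product of two homomorphisms into a common codomain. -/
def fiberProd {H₁ H₂ K : FinGraph} (Ψ₁ : GHom H₁ K) (Ψ₂ : GHom H₂ K) : FinGraph where
  V := {p : H₁.V × H₂.V // Ψ₁.vMap p.1 = Ψ₂.vMap p.2}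
  E := {q : H₁.E × H₂.E // Ψ₁.eMap q.1 = Ψ₂.eMap q.2}
  src := fun q => ⟨(H₁.src q.1.1, H₂.src q.1.2), by
    rw [← Ψ₁.src_eq, ← Ψ₂.src_eq, q.2]⟩
  tgt := fun q => ⟨(H₁.tgt q.1.1, H₂.tgt q.1.2), by
    rw [← Ψ₁.tgt_eq, ← Ψ₂.tgt_eq, q.2]⟩

/-- First coordinate projection of the fiber product. -/
def fpProj₁ {H₁ H₂ K : FinGraph} (Ψ₁ : GHom H₁ K) (Ψ₂ : GHom H₂ K) :
    GHom (fiberProd Ψ₁ Ψ₂) H₁ where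
  eMap := fun q => q.1.1
  vMap := fun p => p.1.1
  src_eq := fun _ => rfl
  tgt_eq := fun _ => rfl

/-- the fiber product of right-resolvers from bunchy graphs to
their common minimal factor is bunchy: outgoing edges of a state of P whose
images under Ψ_P = Ψ_i ∘ Ψ̂_i have the same target have the same target. -/
theorem fiberProd_bunchy {H₁ H₂ M : FinGraph} (Ψ₁ : GHom H₁ M) (Ψ₂ : GHom H₂ M)
    (h₁ : IsRR Ψ₁) (h₂ : IsRR Ψ₂) (hM : MinimalRR M)
    (hb₁ : BunchyVia Ψ₁.vMap) (hb₂ : BunchyVia Ψ₂.vMap) :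
    BunchyVia (GHom.vMap (Ψ₁.comp (fpProj₁ Ψ₁ Ψ₂))) := by
  rintro ⟨⟨e₁, e₂⟩, he⟩ ⟨⟨e₁', e₂'⟩, he'⟩ hsrc htgt
  have hs₁ : H₁.src e₁ = H₁.src e₁' := congrArg (fun p => p.1.1) hsrc
  have hs₂ : H₂.src e₂ = H₂.src e₂' := congrArg (fun p => p.1.2) hsrc
  have ht₁ : Ψ₁.vMap (H₁.tgt e₁) = Ψ₁.vMap (H₁.tgt e₁') := htgt
  have h1 : H₁.tgt e₁ = H₁.tgt e₁' := hb₁ e₁ e₁' hs₁ ht₁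
  have ht₂ : Ψ₂.vMap (H₂.tgt e₂) = Ψ₂.vMap (H₂.tgt e₂') := by
    rw [← Ψ₂.tgt_eq, ← Ψ₂.tgt_eq, ← he, ← he', Ψ₁.tgt_eq, Ψ₁.tgt_eq, ht₁]
  have h2 : H₂.tgt e₂ = H₂.tgt e₂' := hb₂ e₂ e₂' hs₂ ht₂
  apply Subtype.ext
  show (H₁.tgt e₁, H₂.tgt e₂) = (H₁.tgt e₁', H₂.tgt e₂')
  rw [h1, h2]
end
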